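/- Let X := G^{1/2} B, where G = [⟨𝛟_i, 𝛟_j⟩_{ℍ^L}]_{i,j=1}^{Ld} is the (positive definite) Gram matrix of the basis {𝛟_k}, and let (σ_i, v_i, u_i) be the i-th singular triple of the matrix X, i.e., X v_i = σ_i u_i and Xᵀ u_i = σ_i v_i with σ_i > 0 and orthonormal families {v_i} ⊂ ℝ^K, {u_i} ⊂ ℝ^{Ld}. Define ψ_i := 𝒫(G^{−1/2} u_i). Then 𝒳* ψ_i = σ_i v_i, where 𝒳* is the adjoint of the trajectory operator 𝒳. -/

import Mathlib

open MeasureTheory RealInnerProductSpace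

noncomputable section

set_option maxHeartbeats 1000000
set_option synthInstance.maxHeartbeats 1000000

/-- `Fsp T` is the Hilbert space `L²(T)` of square-integrable real functions on a
(compact) subset `T ⊆ ℝ^n`. -/
abbrev Fsp {n : ℕ} (T : Set (EuclideanSpace ℝ (Fin n))) : Type :=
  Lp ℝ 2 (volume.restrict T)

variable {p : ℕ} {m : Fin p → ℕ} {T : ∀ j, Set (EuclideanSpace ℝ (Fin (m j)))}
  {d : Fin p → ℕ}

/-- `F_j^{(d)} = sp{ν_i^{(j)}}_{i=1}^{d_j}`, the span of the chosen basis functions of the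
`j`-th variable. -/
abbrev Fd (ν : ∀ j, Fin (d j) → Fsp (T j)) (j : Fin p) : Submodule ℝ (Fsp (T j)) :=
  Submodule.span ℝ (Set.range (ν j))

/-- `ℍ_d = F₁^{(d)} × ⋯ × F_p^{(d)}`. -/
abbrev Hd (ν : ∀ j, Fin (d j) → Fsp (T j)) : Type :=
  PiLp 2 fun j => Fd ν j

/-- The index set `{1, …, d}`, `d = ∑ⱼ dⱼ`, encoded as pairs `q = (j_q, ℓ_q)`. -/
abbrev Idx (d : Fin p → ℕ) : Type := Σ j : Fin p, Fin (d j)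

/-- `ν⃗_q ∈ ℍ_d`: the `p`-tuple whose components are all the zero function except the
`j_q`-th one, which equals `ν_{ℓ_q}^{(j_q)}`. -/
def nuVec (ν : ∀ j, Fin (d j) → Fsp (T j)) (q : Idx d) : Hd ν :=
  WithLp.toLp 2 (Pi.single q.1 (⟨ν q.1 q.2, Submodule.subset_span ⟨q.2, rfl⟩⟩ : Fd ν q.1))

/-- `ℍ_d^L`, the Cartesian product of `L` copies of `ℍ_d`. -/
abbrev HdL (L : ℕ) (ν : ∀ j, Fin (d j) → Fsp (T j)) : Type :=
  PiLp 2 fun _ : Fin L => Hd ν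

/-- The index set `{1, …, Ld}` encoded as pairs `k = (q_k, r_k)`. -/
abbrev IdxL (d : Fin p → ℕ) (L : ℕ) : Type := Idx d × Fin L

/-- `𝛟_k ∈ ℍ_d^L`: the `L`-tuple whose components are all zero except the `r_k`-th one,
which equals `ν⃗_{q_k}`. -/
def phiVec (ν : ∀ j, Fin (d j) → Fsp (T j)) (L : ℕ) (k : IdxL d L) : HdL L ν :=
  WithLp.toLp 2 (Pi.single k.2 (nuVec ν k.1))

/-- The linear operator `𝒫 : ℝ^{Ld} → ℍ_d^L`, `𝒫(b) = ∑ᵢ bᵢ 𝛟ᵢ`. -/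
def Pop (ν : ∀ j, Fin (d j) → Fsp (T j)) (L : ℕ)
    (b : EuclideanSpace ℝ (IdxL d L)) : HdL L ν :=
  ∑ i : IdxL d L, b i • phiVec ν L i

/-- The multivariate functional lagged vectors `𝐱ₖ = (ŷ_k, …, ŷ_{k+L-1}) ∈ ℍ_d^L`. -/
def laggedHd (ν : ∀ j, Fin (d j) → Fsp (T j)) {N L K : ℕ} (hK : K + L = N + 1)
    (y : Fin N → Hd ν) (k : Fin K) : HdL L ν :=
  WithLp.toLp 2 (fun i : Fin L => y ⟨k.1 + i.1, by omega⟩)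

/-- The trajectory operator `𝒳 : ℝ^K → ℍ_d^L`, `𝒳(a) = ∑ₖ aₖ 𝐱ₖ`. -/
def trajHd (ν : ∀ j, Fin (d j) → Fsp (T j)) {N L K : ℕ} (hK : K + L = N + 1)
    (y : Fin N → Hd ν) (a : EuclideanSpace ℝ (Fin K)) : HdL L ν :=
  ∑ k : Fin K, a k • laggedHd ν hK y k

/-- The positive semidefinite square root of a positive semidefinite matrix (the definition
`Matrix.PosSemidef.sqrt` of the older Mathlib, which has since been removed). -/
def Matrix.PosSemidef.sqrt {n : Type*} [Fintype n] [DecidableEq n]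
    {A : Matrix n n ℝ} (hA : A.PosSemidef) : Matrix n n ℝ :=
  (hA.1.eigenvectorUnitary : Matrix n n ℝ) *
    Matrix.diagonal (Real.sqrt ∘ hA.1.eigenvalues) *
    (star hA.1.eigenvectorUnitary : Matrix n n ℝ)

/-- Let `X = G^{1/2} B` with `G` the (positive definite) Gram matrix of
the basis `{𝛟ₖ}`, and let `(σᵢ, vᵢ, uᵢ)` be a singular triple of `X`, i.e.
`X vᵢ = σᵢ uᵢ`, `Xᵀ uᵢ = σᵢ vᵢ`, `σᵢ > 0`, with orthonormal families `{vᵢ} ⊆ ℝ^K`,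
`{uᵢ} ⊆ ℝ^{Ld}`. Define `ψᵢ = 𝒫(G^{-1/2} uᵢ)`. Then `𝒳* ψᵢ = σᵢ vᵢ`, where `𝒳*` is the
adjoint of the trajectory operator `𝒳`. -/
theorem recipe_adjoint_eigenrelation
    {p : ℕ} {m : Fin p → ℕ} {T : ∀ j, Set (EuclideanSpace ℝ (Fin (m j)))}
    (hT : ∀ j, IsCompact (T j)) {d : Fin p → ℕ}
    (ν : ∀ j, Fin (d j) → Fsp (T j)) (hν : ∀ j, LinearIndependent ℝ (ν j))
    {N L K : ℕ} (hL : 0 < L) (hLN : 2 * L < N) (hK : K + L = N + 1)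
    (y : Fin N → Hd ν)
    (b : Fin K → EuclideanSpace ℝ (IdxL d L))
    (hb : ∀ k : Fin K, laggedHd ν hK y k = Pop ν L (b k))
    (G : Matrix (IdxL d L) (IdxL d L) ℝ)
    (hGdef : G = Matrix.of fun i i' : IdxL d L => ⟪phiVec ν L i, phiVec ν L i'⟫)
    (hG : G.PosDef)
    (X : Matrix (IdxL d L) (Fin K) ℝ)
    (hX : X = (Matrix.PosSemidef.sqrt hG.posSemidef) * Matrix.of (fun i (k : Fin K) => b k i))
    (r : ℕ) (σ : Fin r → ℝ) (v : Fin r → EuclideanSpace ℝ (Fin K))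
    (u : Fin r → EuclideanSpace ℝ (IdxL d L))
    (hσ : ∀ i, 0 < σ i) (hv : Orthonormal ℝ v) (hu : Orthonormal ℝ u)
    (hXv : ∀ i, X.mulVec (v i) = σ i • u i)
    (hXtu : ∀ i, X.transpose.mulVec (u i) = σ i • v i)
    (ψ : Fin r → HdL L ν)
    (hψ : ∀ i, ψ i = Pop ν L (WithLp.toLp 2 ((Matrix.PosSemidef.sqrt hG.posSemidef)⁻¹.mulVec (u i))))
    (Xstar : HdL L ν → EuclideanSpace ℝ (Fin K))
    (hadj : ∀ (a : EuclideanSpace ℝ (Fin K)) (z : HdL L ν),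
      ⟪trajHd ν hK y a, z⟫ = ⟪a, Xstar z⟫) :
    ∀ i : Fin r, Xstar (ψ i) = σ i • v i := by
  -- Package the square root as an abstract matrix `S` to avoid dependent rewriting issues.
  obtain ⟨S, hSS, hSsym, hX', hψ'⟩ :
      ∃ S : Matrix (IdxL d L) (IdxL d L) ℝ, S * S = G ∧ S.transpose = S ∧
        X = S * Matrix.of (fun i (k : Fin K) => b k i) ∧
        (∀ i, ψ i = Pop ν L (WithLp.toLp 2 (S⁻¹.mulVec (u i)))) := by
    refine ⟨Matrix.PosSemidef.sqrt hG.posSemidef, ?_, ?_, hX, hψ⟩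
    · have hspec := hG.posSemidef.1.spectral_theorem
      rw [Unitary.conjStarAlgAut_apply] at hspec
      have hU : (star hG.posSemidef.1.eigenvectorUnitary : Matrix (IdxL d L) (IdxL d L) ℝ) *
          (hG.posSemidef.1.eigenvectorUnitary : Matrix (IdxL d L) (IdxL d L) ℝ) = 1 := by simp
      unfold Matrix.PosSemidef.sqrt
      conv_rhs => rw [hspec]
      simp only [Matrix.mul_assoc]
      rw [← Matrix.mul_assoc (star _), hU, Matrix.one_mul, ← Matrix.mul_assoc (Matrix.diagonal _),
        Matrix.diagonal_mul_diagonal]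
      congr 2; ext j j'
      rw [Matrix.diagonal_apply, Matrix.diagonal_apply]
      split_ifs with hjj
      · subst hjj; exact Real.mul_self_sqrt (hG.posSemidef.eigenvalues_nonneg _)
      · rfl
    · unfold Matrix.PosSemidef.sqrt
      simp [Matrix.transpose_mul, Matrix.star_eq_conjTranspose, Matrix.mul_assoc]
  clear hX hψ
  have hdet : S.det ≠ 0 := by
    have h2 : S.det * S.det = G.det := by rw [← Matrix.det_mul, hSS]
    intro h; rw [h, mul_zero] at h2; exact (hG.det_pos).ne' h2.symm
  have hGS : G * S⁻¹ = S := by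
    rw [← hSS, Matrix.mul_assoc, Matrix.mul_nonsing_inv _ hdet.isUnit, Matrix.mul_one]
  -- inner products of `Pop`s are computed by the Gram matrix
  have key : ∀ c e : EuclideanSpace ℝ (IdxL d L),
      ⟪Pop ν L c, Pop ν L e⟫ = dotProduct c (G.mulVec e) := by
    intro c e
    rw [hGdef]
    simp only [Pop, sum_inner, inner_sum, real_inner_smul_left, real_inner_smul_right,
      dotProduct, Matrix.mulVec, Matrix.of_apply, Finset.mul_sum]
    rw [Finset.sum_comm]
    exact Finset.sum_congr rfl fun i _ => Finset.sum_congr rfl fun j _ => by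
      have h1 := real_inner_smul_left (phiVec ν L i) (e.ofLp j • phiVec ν L j) (c.ofLp i)
      have h2 := real_inner_smul_right (phiVec ν L i) (phiVec ν L j) (e.ofLp j)
      exact h1.trans (by rw [h2]; ring)
  -- trajectory operator applied to a coordinate vector gives a lagged vector
  have htraj : ∀ k : Fin K,
      trajHd ν hK y (EuclideanSpace.single k (1 : ℝ)) = laggedHd ν hK y k := by
    intro k
    simp only [trajHd, EuclideanSpace.single_apply, ite_smul, one_smul, zero_smul]
    rw [Finset.sum_ite_eq' Finset.univ k]
    simp
  intro i
  ext k
  have h1 : Xstar (ψ i) k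
      = ⟪trajHd ν hK y (EuclideanSpace.single k (1 : ℝ)), ψ i⟫ := by
    rw [hadj, EuclideanSpace.inner_single_left]
    simp
  rw [h1, htraj, hb, hψ' i, key]
  have h2 : G.mulVec (S⁻¹.mulVec (u i)) = S.mulVec (u i) := by
    rw [Matrix.mulVec_mulVec, hGS]
  rw [h2]
  -- right hand side
  have h3 : (σ i • v i) k = (X.transpose.mulVec (u i)) k := by rw [hXtu]; rfl
  rw [PiLp.smul_apply, smul_eq_mul] at h3 ⊢
  rw [h3, hX', Matrix.transpose_mul, hSsym, ← Matrix.mulVec_mulVec]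
  simp [Matrix.mulVec, dotProduct, Matrix.transpose, Matrix.of_apply]
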